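/- arXiv:1309.0977 — 3 statements merged into one kernel-verified Lean document; each statement's English description precedes it below -/
import Mathlib

section
/- Let g be a symmetric bilinear form on V compatible with J as a Norden metric, i.e. g(Jx, Jy) = -g(x,y). Define the bilinear form ĝ on V ⊕ V by ĝ((x₁,y₁),(x₂,y₂)) = g(x₁,y₂) + g(y₁,x₂). Then ĝ is symmetric and satisfies ĝ(J₁·, J₁·) = ĝ, ĝ(J₂·, J₂·) = -ĝ, and ĝ(J₃·, J₃·) = -ĝ, where J₁(x,y) = (-Jx, Jy), J₂(x,y) = (-y, x), J₃(x,y) = (Jy, Jx). -/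
/-!
Writing `ĝ((x₁, y₁), (x₂, y₂)) = g(x₁, y₂) + g(y₁, x₂)`, each of `J₁, J₂, J₃` acts on the two
summands separately: `J₂` negates both by bilinearity, while `J₁` and `J₃` apply `J` to both
arguments of each summand (with two or no sign changes), so the Norden condition `g(J·, J·) = -g`
gives `+ĝ` and `-ĝ` respectively.
-/

namespace LinearMap

variable {R M : Type*} [CommRing R] [AddCommGroup M] [Module R M]

def completeLift (g : M →ₗ[R] M →ₗ[R] R) (p q : M × M) : R :=
  g p.1 q.2 + g p.2 q.1

variable {g : M →ₗ[R] M →ₗ[R] R}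

theorem completeLift_comm (hg : ∀ x y, g x y = g y x) (p q : M × M) :
    completeLift g p q = completeLift g q p := by
  simp only [completeLift, hg p.1, hg p.2, add_comm]

theorem completeLift_neg_map_map {J : M →ₗ[R] M} (hN : ∀ x y, g (J x) (J y) = -g x y)
    (p q : M × M) :
    completeLift g (-J p.1, J p.2) (-J q.1, J q.2) = completeLift g p q := by
  simp only [completeLift, map_neg, neg_apply, hN, neg_neg]

theorem completeLift_neg_swap (p q : M × M) :
    completeLift g (-p.2, p.1) (-q.2, q.1) = -completeLift g p q := by
  simp only [completeLift, map_neg, neg_apply]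
  ring

theorem completeLift_map_swap {J : M →ₗ[R] M} (hN : ∀ x y, g (J x) (J y) = -g x y)
    (p q : M × M) :
    completeLift g (J p.2, J p.1) (J q.2, J q.1) = -completeLift g p q := by
  simp only [completeLift, hN]
  ring

end LinearMap

open LinearMap in
theorem stmt_2_general {V : Type*} [AddCommGroup V] [Module ℝ V]
    (J : V →ₗ[ℝ] V)
    (g : V →ₗ[ℝ] V →ₗ[ℝ] ℝ)
    (hgsym : ∀ x y, g x y = g y x)
    (hNorden : ∀ x y, g (J x) (J y) = -g x y)
    (gh : V × V → V × V → ℝ)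
    (hgh : ∀ p q, gh p q = g p.1 q.2 + g p.2 q.1)
    (J₁ J₂ J₃ : V × V → V × V)
    (hJ₁ : ∀ p, J₁ p = (-(J p.1), J p.2))
    (hJ₂ : ∀ p, J₂ p = (-p.2, p.1))
    (hJ₃ : ∀ p, J₃ p = (J p.2, J p.1)) :
    (∀ p q, gh p q = gh q p) ∧
    (∀ p q, gh (J₁ p) (J₁ q) = gh p q) ∧
    (∀ p q, gh (J₂ p) (J₂ q) = -gh p q) ∧
    (∀ p q, gh (J₃ p) (J₃ q) = -gh p q) := by
  obtain rfl : gh = completeLift g := funext₂ hgh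
  simp only [hJ₁, hJ₂, hJ₃]
  exact ⟨completeLift_comm hgsym, completeLift_neg_map_map hNorden, completeLift_neg_swap,
    completeLift_map_swap hNorden⟩

theorem stmt_2 {V : Type*} [AddCommGroup V] [Module ℝ V]
    (J : V →ₗ[ℝ] V) (hJ : ∀ x, J (J x) = -x)
    (g : V →ₗ[ℝ] V →ₗ[ℝ] ℝ)
    (hgsym : ∀ x y, g x y = g y x)
    (hNorden : ∀ x y, g (J x) (J y) = -g x y)
    (gh : V × V → V × V → ℝ)
    (hgh : ∀ p q, gh p q = g p.1 q.2 + g p.2 q.1)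
    (J₁ J₂ J₃ : V × V → V × V)
    (hJ₁ : ∀ p, J₁ p = (-(J p.1), J p.2))
    (hJ₂ : ∀ p, J₂ p = (-p.2, p.1))
    (hJ₃ : ∀ p, J₃ p = (J p.2, J p.1)) :
    (∀ p q, gh p q = gh q p) ∧
    (∀ p q, gh (J₁ p) (J₁ q) = gh p q) ∧
    (∀ p q, gh (J₂ p) (J₂ q) = -gh p q) ∧
    (∀ p q, gh (J₃ p) (J₃ q) = -gh p q) :=
  stmt_2_general J g hgsym hNorden gh hgh J₁ J₂ J₃ hJ₁ hJ₂ hJ₃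
end

section
/- For the h-sphere curvature tensor R = ν(π₁ - π₂) + ν*π₃ with ν = a/(a²+b²), ν* = -b/(a²+b²), every holomorphic 2-plane has zero sectional curvature: if y = Jx and g(x,x)g(y,y) - g(x,y)² ≠ 0, then R(x, y, y, x) = 0. -/
/-! Since `J (J x) = -x` and `g (J x) (J x) = -g x x`, every term of `π₁`, `π₂`, `π₃` at
`(x, J x, J x, x)` is a product of `g x x` and `g x (J x)`: then `π₁ = π₂` and the terms of `π₃`
cancel in pairs, whatever `ν` and `ν*` are. -/

section Norden

variable {V : Type*} [AddCommGroup V] [Module ℝ V] {J : V →ₗ[ℝ] V} {g : V →ₗ[ℝ] V →ₗ[ℝ] ℝ}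
  {gt : V → V → ℝ}

theorem holomorphic_pi₁_eq_pi₂ (hJ : ∀ x, J (J x) = -x) (hgsym : ∀ x y, g x y = g y x)
    (hNorden : ∀ x y, g (J x) (J y) = -g x y) (hgt : ∀ x y, gt x y = g x (J y)) (x : V) :
    g (J x) (J x) * g x x - g x (J x) * g (J x) x =
      gt (J x) (J x) * gt x x - gt x (J x) * gt (J x) x := by
  simp only [hgt, hJ, hNorden, map_neg]
  rw [hgsym (J x) x]
  ring

theorem holomorphic_pi₃_eq_zero (hJ : ∀ x, J (J x) = -x) (hgt : ∀ x y, gt x y = g x (J y))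
    (x : V) :
    -g (J x) (J x) * gt x x + g x (J x) * gt (J x) x - gt (J x) (J x) * g x x
      + gt x (J x) * g (J x) x = 0 := by
  simp only [hgt, hJ, map_neg]
  ring

end Norden

theorem stmt_10_general {V : Type*} [AddCommGroup V] [Module ℝ V]
    (J : V →ₗ[ℝ] V) (hJ : ∀ x, J (J x) = -x)
    (g : V →ₗ[ℝ] V →ₗ[ℝ] ℝ)
    (hgsym : ∀ x y, g x y = g y x)
    (hNorden : ∀ x y, g (J x) (J y) = -g x y)
    (gt : V → V → ℝ) (hgt : ∀ x y, gt x y = g x (J y))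
    (π₁ π₂ π₃ : V → V → V → V → ℝ)
    (hπ₁ : ∀ x y z w, π₁ x y z w = g y z * g x w - g x z * g y w)
    (hπ₂ : ∀ x y z w, π₂ x y z w = gt y z * gt x w - gt x z * gt y w)
    (hπ₃ : ∀ x y z w, π₃ x y z w =
      -g y z * gt x w + g x z * gt y w - gt y z * g x w + gt x z * g y w)
    (ν νs : ℝ)
    (R : V → V → V → V → ℝ)
    (hR : ∀ x y z w, R x y z w = ν * (π₁ x y z w - π₂ x y z w) + νs * π₃ x y z w) :
    ∀ x y : V, y = J x → g x x * g y y - (g x y) ^ 2 ≠ 0 → R x y y x = 0 := by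
  rintro x _ rfl -
  rw [hR, hπ₁, hπ₂, hπ₃]
  linear_combination ν * holomorphic_pi₁_eq_pi₂ hJ hgsym hNorden hgt x
    + νs * holomorphic_pi₃_eq_zero hJ hgt x

theorem stmt_10 {V : Type*} [AddCommGroup V] [Module ℝ V]
    (J : V →ₗ[ℝ] V) (hJ : ∀ x, J (J x) = -x)
    (g : V →ₗ[ℝ] V →ₗ[ℝ] ℝ)
    (hgsym : ∀ x y, g x y = g y x)
    (hnd : ∀ x : V, (∀ y, g x y = 0) → x = 0)
    (hNorden : ∀ x y, g (J x) (J y) = -g x y)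
    (gt : V → V → ℝ) (hgt : ∀ x y, gt x y = g x (J y))
    (π₁ π₂ π₃ : V → V → V → V → ℝ)
    (hπ₁ : ∀ x y z w, π₁ x y z w = g y z * g x w - g x z * g y w)
    (hπ₂ : ∀ x y z w, π₂ x y z w = gt y z * gt x w - gt x z * gt y w)
    (hπ₃ : ∀ x y z w, π₃ x y z w =
      -g y z * gt x w + g x z * gt y w - gt y z * g x w + gt x z * g y w)
    (a b : ℝ) (hab : (a, b) ≠ ((0 : ℝ), (0 : ℝ)))
    (ν νs : ℝ) (hν : ν = a / (a ^ 2 + b ^ 2)) (hνs : νs = -b / (a ^ 2 + b ^ 2))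
    (R : V → V → V → V → ℝ)
    (hR : ∀ x y z w, R x y z w = ν * (π₁ x y z w - π₂ x y z w) + νs * π₃ x y z w) :
    ∀ x y : V, y = J x → g x x * g y y - (g x y) ^ 2 ≠ 0 → R x y y x = 0 :=
  stmt_10_general J hJ g hgsym hNorden gt hgt π₁ π₂ π₃ hπ₁ hπ₂ hπ₃ ν νs R hR
end

section
/- Given two anticommuting almost complex structures A, B on a Lie algebra L with A² = B² = -id and C = AB, if the Nijenhuis tensors N_A and N_B both vanish identically, then N_C also vanishes (so a triple is hypercomplex as soon as two of the three Nijenhuis tensors vanish). -/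
/-!
Writing `C = AB` and expanding, anticommutation `AB = -BA` gives the polarization identity
`2 N_C(x, y) = N_A(x, y) + N_A(Bx, By) + N_B(x, y) + N_B(Ax, Ay)
  - A N_B(x, Ay) - A N_B(Ax, y) - B N_A(x, By) - B N_A(Bx, y)`,
so `N_C` vanishes with `N_A` and `N_B` as soon as `2` is not a zero divisor on `L`.
-/

section Nijenhuis

variable {R L : Type*} [Semiring R] [LieRing L] [Module R L]

def nijenhuis (J : Module.End R L) (x y : L) : L :=
  ⁅x, y⁆ + J ⁅J x, y⁆ + J ⁅x, J y⁆ - ⁅J x, J y⁆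

variable {A B : Module.End R L}

theorem two_nsmul_nijenhuis_mul (hAB : ∀ x, A (B x) = -(B (A x))) (x y : L) :
    2 • nijenhuis (A * B) x y =
      nijenhuis A x y + nijenhuis A (B x) (B y) + nijenhuis B x y + nijenhuis B (A x) (A y)
        - A (nijenhuis B x (A y)) - A (nijenhuis B (A x) y)
        - B (nijenhuis A x (B y)) - B (nijenhuis A (B x) y) := by
  have hBA : ∀ z, B (A z) = -(A (B z)) := fun z => by rw [hAB, neg_neg]
  simp only [nijenhuis, Module.End.mul_apply, map_add, map_sub, map_neg, hBA,
    lie_neg, neg_lie, neg_neg, two_nsmul]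
  abel

theorem nijenhuis_mul_eq_zero [IsAddTorsionFree L] (hAB : ∀ x, A (B x) = -(B (A x)))
    (hNA : ∀ x y, nijenhuis A x y = 0) (hNB : ∀ x y, nijenhuis B x y = 0) (x y : L) :
    nijenhuis (A * B) x y = 0 := by
  have h := two_nsmul_nijenhuis_mul hAB x y
  simp only [hNA, hNB, map_zero, add_zero, sub_zero] at h
  exact (nsmul_eq_zero_iff_right two_ne_zero).mp h

end Nijenhuis

theorem stmt_16_general {L : Type*} [LieRing L] [LieAlgebra ℝ L]
    (A B C : L →ₗ[ℝ] L)
    (hAB : ∀ x, A (B x) = -(B (A x)))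
    (hC : ∀ x, C x = A (B x))
    (NA NB NC : L → L → L)
    (hNA : ∀ x y, NA x y = ⁅x, y⁆ + A ⁅A x, y⁆ + A ⁅x, A y⁆ - ⁅A x, A y⁆)
    (hNB : ∀ x y, NB x y = ⁅x, y⁆ + B ⁅B x, y⁆ + B ⁅x, B y⁆ - ⁅B x, B y⁆)
    (hNC : ∀ x y, NC x y = ⁅x, y⁆ + C ⁅C x, y⁆ + C ⁅x, C y⁆ - ⁅C x, C y⁆)
    (hNAzero : ∀ x y, NA x y = 0) (hNBzero : ∀ x y, NB x y = 0) :
    ∀ x y, NC x y = 0 := by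
  have : IsAddTorsionFree L := .of_isTorsionFree ℝ L
  obtain rfl : C = A * B := LinearMap.ext hC
  intro x y
  rw [hNC]
  exact nijenhuis_mul_eq_zero hAB (fun x y => (hNA x y).symm.trans (hNAzero x y))
    (fun x y => (hNB x y).symm.trans (hNBzero x y)) x y

theorem stmt_16 {L : Type*} [LieRing L] [LieAlgebra ℝ L]
    (A B C : L →ₗ[ℝ] L)
    (hA : ∀ x, A (A x) = -x) (hB : ∀ x, B (B x) = -x)
    (hAB : ∀ x, A (B x) = -(B (A x)))
    (hC : ∀ x, C x = A (B x))
    (NA NB NC : L → L → L)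
    (hNA : ∀ x y, NA x y = ⁅x, y⁆ + A ⁅A x, y⁆ + A ⁅x, A y⁆ - ⁅A x, A y⁆)
    (hNB : ∀ x y, NB x y = ⁅x, y⁆ + B ⁅B x, y⁆ + B ⁅x, B y⁆ - ⁅B x, B y⁆)
    (hNC : ∀ x y, NC x y = ⁅x, y⁆ + C ⁅C x, y⁆ + C ⁅x, C y⁆ - ⁅C x, C y⁆)
    (hNAzero : ∀ x y, NA x y = 0) (hNBzero : ∀ x y, NB x y = 0) :
    ∀ x y, NC x y = 0 :=
  stmt_16_general A B C hAB hC NA NB NC hNA hNB hNC hNAzero hNBzero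
end
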